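/- Define J₀ : ℝ → ℝ by J₀(x) = (1/(2π)) · ∫_{φ=−π}^{π} cos(x · sin(φ)) dφ. Then for every real number a, ∫_{θ=0}^{π/2} J₀(a · sin(θ)) dθ = (π/2) · ( J₀(a/2) )². -/

import Mathlib

/-!
Squaring the integral representation turns `(2π J₀(c))²` into a double integral of
`cos (c sin α) cos (c sin β)` over a period square. The product-to-sum formula and the symmetry
`β ↦ -β` replace the integrand by `cos (c (sin α + sin β))`; writing `β = α + 2t` gives
`sin α + sin β = 2 cos t sin (α + t)`, so after Fubini the `α`-integral is, by periodicity,
`2π J₀(2c cos t)`. Hence `J₀(c)² = π⁻¹ ∫_{-π/2}^{π/2} J₀(2c cos t) dt`, and folding the interval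
at `0` and reflecting at `π/4` gives the claim with `c = a/2`.
-/

open Real intervalIntegral Function Set

noncomputable def besselJ0 (x : ℝ) : ℝ :=
  (1 / (2 * Real.pi)) * ∫ φ in (-Real.pi)..Real.pi, Real.cos (x * Real.sin φ)

section

variable {E : Type*} [NormedAddCommGroup E] [NormedSpace ℝ E]

theorem intervalIntegral_intervalIntegral_swap_of_continuous
    {F : ℝ → ℝ → E} (hF : Continuous (uncurry F)) (a b c d : ℝ) :
    ∫ x in a..b, ∫ y in c..d, F x y = ∫ y in c..d, ∫ x in a..b, F x y :=
  MeasureTheory.intervalIntegral_intervalIntegral_swap <|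
    (hF.continuousOn.integrableOn_compact (isCompact_uIcc.prod isCompact_uIcc)).mono_set
      (prod_mono uIoc_subset_uIcc uIoc_subset_uIcc)

theorem Function.Periodic.intervalIntegral_comp_add_right {f : ℝ → E} {T : ℝ}
    (hf : Periodic f T) (t s : ℝ) :
    ∫ x in t..t + T, f (x + s) = ∫ x in t..t + T, f x := by
  rw [integral_comp_add_right, add_right_comm, hf.intervalIntegral_add_eq]

theorem integral_comp_cos_eq_two_smul_integral_comp_sin {g : ℝ → E} (hg : Continuous g) :
    ∫ t in -(π / 2)..π / 2, g (cos t) = (2 : ℝ) • ∫ θ in 0..π / 2, g (sin θ) := by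
  have hint : ∀ a b : ℝ, IntervalIntegrable (fun t ↦ g (cos t)) MeasureTheory.volume a b :=
    fun a b ↦ (hg.comp continuous_cos).intervalIntegrable a b
  have h_even : ∫ t in -(π / 2)..0, g (cos t) = ∫ t in 0..π / 2, g (cos t) := by
    simpa only [cos_neg, neg_zero] using (integral_comp_neg (fun t ↦ g (cos t))
      (a := 0) (b := π / 2)).symm
  have h_refl : ∫ t in 0..π / 2, g (cos t) = ∫ θ in 0..π / 2, g (sin θ) := by
    simpa only [sin_pi_div_two_sub, sub_self, sub_zero] using
      integral_comp_sub_left (fun θ ↦ g (sin θ)) (π / 2) (a := 0) (b := π / 2)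
  rw [← integral_add_adjacent_intervals (hint _ 0) (hint 0 _), h_even, h_refl, two_smul]

end

theorem continuous_besselJ0 : Continuous besselJ0 :=
  continuous_const.mul (continuous_parametric_intervalIntegral_of_continuous' (by fun_prop) _ _)

theorem integral_cos_mul_sin (x : ℝ) :
    ∫ φ in -π..π, cos (x * sin φ) = 2 * π * besselJ0 x := by
  rw [besselJ0]
  field_simp

theorem integral_cos_mul_sin_add (x s : ℝ) :
    ∫ φ in -π..π, cos (x * sin (φ + s)) = 2 * π * besselJ0 x := by
  have hper : Periodic (fun φ ↦ cos (x * sin φ)) (2 * π) :=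
    sin_periodic.comp fun y ↦ cos (x * y)
  have := hper.intervalIntegral_comp_add_right (-π) s
  rw [show -π + 2 * π = π by ring] at this
  exact this.trans (integral_cos_mul_sin x)

theorem integral_cos_mul_cos_mul_sin (y c : ℝ) :
    ∫ β in -π..π, cos y * cos (c * sin β) = ∫ β in -π..π, cos (y + c * sin β) := by
  have h_odd : ∫ β in -π..π, cos (y - c * sin β) = ∫ β in -π..π, cos (y + c * sin β) := by
    simpa only [sin_neg, mul_neg, sub_eq_add_neg, neg_neg] using
      integral_comp_neg (fun β ↦ cos (y + c * sin β)) (a := -π) (b := π)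
  have hint : ∀ f : ℝ → ℝ, Continuous f → IntervalIntegrable f MeasureTheory.volume (-π) π :=
    fun f hf ↦ hf.intervalIntegrable _ _
  calc ∫ β in -π..π, cos y * cos (c * sin β)
      = ∫ β in -π..π, (cos (y - c * sin β) + cos (y + c * sin β)) / 2 := by
        congr 1; ext β; rw [← two_mul_cos_mul_cos]; ring
    _ = ((∫ β in -π..π, cos (y - c * sin β)) + ∫ β in -π..π, cos (y + c * sin β)) / 2 := by
        rw [integral_div, integral_add (hint _ (by fun_prop)) (hint _ (by fun_prop))]
    _ = ∫ β in -π..π, cos (y + c * sin β) := by rw [h_odd]; ring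

theorem integral_cos_mul_sin_add_sin (c α : ℝ) :
    ∫ β in -π..π, cos (c * sin α + c * sin β) =
      2 * ∫ t in -(π / 2)..π / 2, cos (2 * c * cos t * sin (α + t)) := by
  set g : ℝ → ℝ := fun β ↦ cos (c * sin α + c * sin β)
  have hper : Periodic g (2 * π) := sin_periodic.comp fun y ↦ cos (c * sin α + c * y)
  have h_shift : ∫ β in -π..π, g β = ∫ β in α - π..α + π, g β := by
    simpa only [show -π + 2 * π = π by ring, show α - π + 2 * π = α + π by ring] using
      hper.intervalIntegral_add_eq (-π) (α - π)
  have h_subst := integral_comp_mul_add g (two_ne_zero (α := ℝ)) α (a := -(π / 2)) (b := π / 2)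
  rw [show 2 * -(π / 2) + α = α - π by ring, show 2 * (π / 2) + α = α + π by ring,
    smul_eq_mul] at h_subst
  rw [h_shift, ← mul_inv_cancel_left₀ (two_ne_zero (α := ℝ)) (∫ β in α - π..α + π, g β),
    ← h_subst]
  congr 2; ext t
  simp only [g, ← mul_add, sin_add_sin]
  rw [show (α + (2 * t + α)) / 2 = α + t by ring, show (α - (2 * t + α)) / 2 = -t by ring,
    cos_neg]
  ring_nf

theorem besselJ0_sq (c : ℝ) :
    besselJ0 c ^ 2 = π⁻¹ * ∫ t in -(π / 2)..π / 2, besselJ0 (2 * c * cos t) := by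
  have h_square : (2 * π * besselJ0 c) ^ 2 =
      ∫ α in -π..π, ∫ β in -π..π, cos (c * sin α) * cos (c * sin β) := by
    simp only [integral_const_mul, integral_mul_const, integral_cos_mul_sin, sq]
  have h_inner : ∀ α, ∫ β in -π..π, cos (c * sin α) * cos (c * sin β) =
      2 * ∫ t in -(π / 2)..π / 2, cos (2 * c * cos t * sin (α + t)) := fun α ↦ by
    rw [integral_cos_mul_cos_mul_sin, integral_cos_mul_sin_add_sin]
  simp only [h_inner, integral_const_mul] at h_square
  rw [intervalIntegral_intervalIntegral_swap_of_continuous (by fun_prop)] at h_square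
  simp only [integral_cos_mul_sin_add, integral_const_mul] at h_square
  rw [eq_inv_mul_iff_mul_eq₀ pi_ne_zero]
  refine mul_left_cancel₀ (show (4 * π) ≠ 0 by positivity) ?_
  linear_combination h_square

theorem integral_besselJ0_sin (a : ℝ) :
    (∫ θ in (0 : ℝ)..(Real.pi / 2), besselJ0 (a * Real.sin θ)) =
      (Real.pi / 2) * (besselJ0 (a / 2)) ^ 2 := by
  have h := integral_comp_cos_eq_two_smul_integral_comp_sin
    (continuous_besselJ0.comp (continuous_const_mul a))
  simp only [comp_apply, smul_eq_mul] at h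
  rw [besselJ0_sq, show 2 * (a / 2) = a by ring]
  simp only [h]
  field_simp
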